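/- (Correctness of normalization rule NF8.) Let B and D̂ be ALC concepts, r a role name, and A a concept name occurring neither in B nor in D̂. (i) Every crisp interpretation J satisfying both A ⊑ D̂ and B ⊑ ∃r.A also satisfies B ⊑ ∃r.D̂. (ii) For every crisp interpretation I satisfying B ⊑ ∃r.D̂ there exists a crisp interpretation J with the same domain, interpreting every concept name other than A and every role name the same as I, that satisfies both A ⊑ D̂ and B ⊑ ∃r.A. -/
import Mathlib


/-- ALC concepts over concept names `NC` and role names `NR`. -/
inductive ALCConcept (NC NR : Type) : Type
  | top : ALCConcept NC NR
  | bot : ALCConcept NC NR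
  | atom (A : NC) : ALCConcept NC NR
  | neg (C : ALCConcept NC NR) : ALCConcept NC NR
  | conj (C D : ALCConcept NC NR) : ALCConcept NC NR
  | disj (C D : ALCConcept NC NR) : ALCConcept NC NR
  | ex (r : NR) (C : ALCConcept NC NR) : ALCConcept NC NR
  | all (r : NR) (C : ALCConcept NC NR) : ALCConcept NC NR

namespace ALCConcept

/-- The set of concept names occurring in a concept. -/
def conceptNames {NC NR : Type} : ALCConcept NC NR → Set NC
  | top => ∅
  | bot => ∅
  | atom A => {A}
  | neg C => C.conceptNames
  | conj C D => C.conceptNames ∪ D.conceptNames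
  | disj C D => C.conceptNames ∪ D.conceptNames
  | ex _ C => C.conceptNames
  | all _ C => C.conceptNames

/-- The set of role names occurring in a concept. -/
def roleNames {NC NR : Type} : ALCConcept NC NR → Set NR
  | top => ∅
  | bot => ∅
  | atom _ => ∅
  | neg C => C.roleNames
  | conj C D => C.roleNames ∪ D.roleNames
  | disj C D => C.roleNames ∪ D.roleNames
  | ex r C => insert r C.roleNames
  | all r C => insert r C.roleNames

end ALCConcept

/-- A crisp interpretation with domain `Δ`. -/
structure Interp (NC NR Δ : Type) : Type where
  atom : NC → Set Δ
  role : NR → Set (Δ × Δ)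

/-- Extension of a crisp interpretation to all ALC concepts. -/
def Interp.eval {NC NR Δ : Type} (I : Interp NC NR Δ) : ALCConcept NC NR → Set Δ
  | .top => Set.univ
  | .bot => ∅
  | .atom A => I.atom A
  | .neg C => (I.eval C)ᶜ
  | .conj C D => I.eval C ∩ I.eval D
  | .disj C D => I.eval C ∪ I.eval D
  | .ex r C => {a | ∃ b, (a, b) ∈ I.role r ∧ b ∈ I.eval C}
  | .all r C => {a | ∀ b, (a, b) ∈ I.role r → b ∈ I.eval C}

/-- The concept inclusion `C ⊑ D` is true in (satisfied by) `I`. -/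
def Interp.satInclusion {NC NR Δ : Type} (I : Interp NC NR Δ)
    (C D : ALCConcept NC NR) : Prop :=
  I.eval C ⊆ I.eval D


theorem eval_congr {NC NR Δ : Type} (I J : Interp NC NR Δ)
    (C : ALCConcept NC NR)
    (hA : ∀ A ∈ C.conceptNames, J.atom A = I.atom A)
    (hR : ∀ s, J.role s = I.role s) :
    J.eval C = I.eval C := by
  induction C with
  | top => rfl
  | bot => rfl
  | atom A => exact hA A rfl
  | neg C ih => simp only [Interp.eval, ih hA]
  | conj C D ihC ihD =>
      simp only [Interp.eval,
        ihC (fun a ha => hA a (Or.inl ha)), ihD (fun a ha => hA a (Or.inr ha))]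
  | disj C D ihC ihD =>
      simp only [Interp.eval,
        ihC (fun a ha => hA a (Or.inl ha)), ihD (fun a ha => hA a (Or.inr ha))]
  | ex s C ih => simp only [Interp.eval, ih hA, hR]
  | all s C ih => simp only [Interp.eval, ih hA, hR]

/-- correctness of normalization rule NF8,
`B ⊑ ∃r.D̂  ⇒  A ⊑ D̂, B ⊑ ∃r.A` with `A` fresh. -/
theorem nf8_correct {NC NR Δ : Type} [Nonempty Δ]
    (B Dh : ALCConcept NC NR) (r : NR) (A : NC)
    (hB : A ∉ B.conceptNames) (hD : A ∉ Dh.conceptNames) :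
    (∀ J : Interp NC NR Δ,
        J.satInclusion (.atom A) Dh → J.satInclusion B (.ex r (.atom A)) →
          J.satInclusion B (.ex r Dh)) ∧
    (∀ I : Interp NC NR Δ, I.satInclusion B (.ex r Dh) →
        ∃ J : Interp NC NR Δ,
          (∀ B' : NC, B' ≠ A → J.atom B' = I.atom B') ∧
          (∀ s : NR, J.role s = I.role s) ∧
          J.satInclusion (.atom A) Dh ∧ J.satInclusion B (.ex r (.atom A))) := by
  classical
  constructor
  · intro J h1 h2 x hx
    obtain ⟨b, hb, hbA⟩ := h2 hx
    exact ⟨b, hb, h1 hbA⟩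
  · intro I hI
    let J : Interp NC NR Δ := ⟨fun B' => if B' = A then I.eval Dh else I.atom B', I.role⟩
    have hDh : J.eval Dh = I.eval Dh := eval_congr I J Dh
      (fun a ha => by simp [J, show a ≠ A from fun h => hD (h ▸ ha)]) (fun s => rfl)
    have hBe : J.eval B = I.eval B := eval_congr I J B
      (fun a ha => by simp [J, show a ≠ A from fun h => hB (h ▸ ha)]) (fun s => rfl)
    refine ⟨J, fun B' h => by simp [J, h], fun s => rfl, ?_, ?_⟩
    · intro x hx
      rw [show J.eval (ALCConcept.atom A) = I.eval Dh by simp [Interp.eval, J]] at hx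
      rw [hDh]; exact hx
    · intro x hx
      rw [hBe] at hx
      obtain ⟨b, hb, hbD⟩ := hI hx
      exact ⟨b, hb, by simpa [Interp.eval, J] using hbD⟩
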